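/- Let n be a positive integer, λ an infinite cardinal, and τ a shift-continuous T₁ topology on I_λ^n. Then (I_λ^n, τ) is a scattered space: every non-empty subset has a point isolated in that subset. -/

import Mathlib

/-! Choose `x ∈ S` of maximal rank. For `a, b ∈ ι` the set `{y | y a = b}` is open: it is the
preimage of the open set `{0}ᶜ` under the continuous map `y ↦ e_a * y * e_b`, where `e_a`, `e_b`
are the rank-one idempotents at `a` and `b`. Finitely many of these conditions cut out an open
neighbourhood of `x` consisting of the extensions of `x`, and an extension of `x` whose rank is
not larger than that of `x` is `x` itself. -/

open Set Topology

universe v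

namespace ISemi

/-- The set of partial injective transformations (partial bijections) of `ι`
with rank (cardinality of the range, equivalently of the domain) at most `n`. -/
def Elem (ι : Type*) (n : ℕ) : Type _ :=
  {f : ι ≃. ι // {a : ι | (f a).isSome}.encard ≤ (n : ℕ∞)}

variable {ι : Type*} {n : ℕ}

/-- Composition of partial bijections (written multiplicatively). -/
instance : Semigroup (Elem ι n) where
  mul f g := ⟨f.1.trans g.1, by
    refine le_trans (Set.encard_mono ?_) f.2
    intro a ha
    simp only [Set.mem_setOf_eq] at *
    rcases Option.isSome_iff_exists.1 ha with ⟨c, hc⟩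
    rcases (PEquiv.trans_eq_some _ _ _ _).1 hc with ⟨b, hb, -⟩
    simp [hb]⟩
  mul_assoc f g h := Subtype.ext (PEquiv.trans_assoc f.1 g.1 h.1)

/-- The inverse partial bijection. -/
def inv (f : Elem ι n) : Elem ι n := ⟨f.1.symm, by
  have key : ∀ (g : ι ≃. ι), {b : ι | (g.symm b).isSome} ⊆
      (fun p : {a : ι | (g a).isSome} => (g p.1).get p.2) '' Set.univ := by
    intro g b hb
    rcases Option.isSome_iff_exists.1 hb with ⟨a, ha⟩
    have ha' : b ∈ g a := (PEquiv.mem_iff_mem g).1 (Option.mem_def.2 ha)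
    simp only [Option.mem_def] at ha'
    refine ⟨⟨a, ?_⟩, Set.mem_univ _, ?_⟩
    · simp [Set.mem_setOf_eq, ha']
    · simp [ha']
  calc {b : ι | (f.1.symm b).isSome}.encard
      ≤ ((fun p : {a : ι | (f.1 a).isSome} => (f.1 p.1).get p.2) '' Set.univ).encard :=
        Set.encard_mono (key f.1)
    _ ≤ (Set.univ : Set {a : ι | (f.1 a).isSome}).encard := Set.encard_image_le _ _
    _ = {a : ι | (f.1 a).isSome}.encard := by rw [Set.encard_univ]; rfl
    _ ≤ (n : ℕ∞) := f.2⟩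

/-- The zero (the empty partial map). -/
def zero (ι : Type*) (n : ℕ) : Elem ι n := ⟨⊥, by simp [PEquiv.bot_apply]⟩

/-- idempotents -/
def IsIdem (e : Elem ι n) : Prop := e * e = e

/-- The natural partial order on the inverse semigroup `Elem ι n`:
`f ≼ g` iff `f = e * g` for some idempotent `e`. -/
def nle (f g : Elem ι n) : Prop := ∃ e : Elem ι n, IsIdem e ∧ f = e * g

/-- up-set of `f` w.r.t. the natural partial order -/
def upset (f : Elem ι n) : Set (Elem ι n) := {g | nle f g}

/-- the rank of a partial bijection: the cardinality of its domain (= range) -/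
noncomputable def rank (f : Elem ι n) : ℕ∞ := {a : ι | (f.1 a).isSome}.encard

def dom (f : Elem ι n) : Set ι := {a : ι | (f.1 a).isSome}

def ran (f : Elem ι n) : Set ι := {b : ι | (f.1.symm b).isSome}

/-- A topology on `Elem ι n` is shift-continuous if all left and right
translations are continuous. -/
def ShiftContinuous (ι : Type*) (n : ℕ) [TopologicalSpace (Elem ι n)] : Prop :=
  ∀ a : Elem ι n, Continuous (fun x : Elem ι n => a * x) ∧
    Continuous (fun x : Elem ι n => x * a)

/-- A space is feebly compact if every locally finite family of nonempty open
sets is finite. -/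
def FeeblyCompact (X : Type*) [TopologicalSpace X] : Prop :=
  ∀ 𝒰 : Set (Set X), (∀ U ∈ 𝒰, IsOpen U ∧ U.Nonempty) →
    LocallyFinite (fun U : 𝒰 => (U : Set X)) → 𝒰.Finite

/-- A space is `d`-feebly compact if every discrete family of open sets is
finite; a family is discrete if every point has a neighbourhood meeting at
most one member of the family. -/
def DFeeblyCompact (X : Type*) [TopologicalSpace X] : Prop :=
  ∀ 𝒰 : Set (Set X), (∀ U ∈ 𝒰, IsOpen U) →
    (∀ x : X, ∃ V ∈ 𝓝 x, {U ∈ 𝒰 | (U ∩ V).Nonempty}.Subsingleton) → 𝒰.Finite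

/-- countably pracompact: there is a dense set `A` such that every infinite
subset of `A` has an accumulation point in `X`. -/
def CountablyPracompact (X : Type*) [TopologicalSpace X] : Prop :=
  ∃ A : Set X, Dense A ∧ ∀ B ⊆ A, B.Infinite → ∃ x : X, AccPt x (Filter.principal B)

/-- H-closed: closed in every Hausdorff space in which it embeds. -/
def HClosed (X : Type*) [TopologicalSpace X] : Prop :=
  ∀ (Y : Type v) (_ : TopologicalSpace Y), T2Space Y →
    ∀ e : X → Y, IsEmbedding e → IsClosed (Set.range e)

/-- infra H-closed: every continuous image in a first-countable Hausdorff
space is closed. -/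
def InfraHClosed (X : Type*) [TopologicalSpace X] : Prop :=
  ∀ (Y : Type v) (_ : TopologicalSpace Y), T2Space Y →
    FirstCountableTopology Y → ∀ f : X → Y, Continuous f → IsClosed (Set.range f)

/-- `Y`-compactness: every continuous image in `Y` is compact. -/
def YCompact (X : Type*) [TopologicalSpace X] (Y : Type*) [TopologicalSpace Y] : Prop :=
  ∀ f : X → Y, Continuous f → IsCompact (Set.range f)

/-- scattered: every nonempty subset has a point isolated in it. -/
def Scattered (X : Type*) [TopologicalSpace X] : Prop :=
  ∀ S : Set X, S.Nonempty → ∃ x ∈ S, ∃ U : Set X, IsOpen U ∧ U ∩ S = {x}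

/-- semiregular: there is a base consisting of regular open sets. -/
def Semiregular (X : Type*) [TopologicalSpace X] : Prop :=
  ∃ B : Set (Set X), TopologicalSpace.IsTopologicalBasis B ∧
    ∀ U ∈ B, interior (closure U) = U

/-- countably compact: every countable open cover has a finite subcover. -/
def CountablyCompact (X : Type*) [TopologicalSpace X] : Prop :=
  ∀ 𝒰 : Set (Set X), 𝒰.Countable → (∀ U ∈ 𝒰, IsOpen U) → ⋃₀ 𝒰 = Set.univ →
    ∃ 𝒱 ⊆ 𝒰, 𝒱.Finite ∧ ⋃₀ 𝒱 = Set.univ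

end ISemi

namespace ISemi

open Classical

theorem scattered_of_finite_range {X β : Type*} [TopologicalSpace X] [LinearOrder β]
    (r : X → β) (hr : (range r).Finite)
    (h : ∀ x, ∃ U, IsOpen U ∧ x ∈ U ∧ ∀ y ∈ U, r y ≤ r x → y = x) :
    Scattered X := by
  intro S hS
  obtain ⟨_, ⟨x, hxS, rfl⟩, hmax⟩ :=
    (r '' S).exists_max_image id (hr.subset (image_subset_range r S)) (hS.image r)
  obtain ⟨U, hU, hxU, hUx⟩ := h x
  refine ⟨x, hxS, U, hU, subset_antisymm ?_ (singleton_subset_iff.2 ⟨hxU, hxS⟩)⟩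
  exact fun y ⟨hyU, hyS⟩ => hUx y hyU (hmax _ (mem_image_of_mem r hyS))

theorem setOf_isSome_single {ι : Type*} (a b : ι) :
    {c | (PEquiv.single a b c).isSome} = {a} := by
  ext c
  by_cases hc : c = a
  · simp [hc, PEquiv.single_apply]
  · simp [hc, PEquiv.single_apply_of_ne (Ne.symm hc)]

variable {ι : Type*} {n : ℕ}

theorem val_inj {f g : Elem ι n} : f.1 = g.1 ↔ f = g := Subtype.val_inj

theorem mul_val (f g : Elem ι n) : (f * g).1 = f.1.trans g.1 := rfl

theorem zero_val : (zero ι n).1 = ⊥ := rfl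

theorem dom_finite (f : Elem ι n) : (dom f).Finite :=
  finite_of_encard_le_coe f.2

theorem finite_range_rank : (range (rank : Elem ι n → ℕ∞)).Finite :=
  ((finite_Iic n).image Nat.cast).subset <| range_subset_iff.2 fun f =>
    let ⟨k, hk, hkn⟩ := ENat.le_natCast_iff.1 f.2
    ⟨k, hkn, hk.symm⟩

theorem pos_of_mem_dom {f : Elem ι n} {a : ι} (ha : a ∈ dom f) : 0 < n := by
  have h : (1 : ℕ∞) ≤ n := calc
    (1 : ℕ∞) = ({a} : Set ι).encard := (encard_singleton a).symm
    _ ≤ (dom f).encard := encard_mono (singleton_subset_iff.2 ha)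
    _ ≤ n := f.2
  exact_mod_cast h

noncomputable def single (a b : ι) (hn : 0 < n) : Elem ι n :=
  ⟨PEquiv.single a b, by rw [setOf_isSome_single, encard_singleton]; exact_mod_cast hn⟩

theorem single_mul_mul_single_eq_zero_iff (hn : 0 < n) (a b : ι) (y : Elem ι n) :
    single a a hn * y * single b b hn = zero ι n ↔ y.1 a ≠ some b := by
  rw [← val_inj, mul_val, mul_val, zero_val]
  rcases hy : y.1 a with _ | c
  · simp [single, PEquiv.single_trans_of_eq_none a hy]
  · rw [single, PEquiv.single_trans_of_mem a (Option.mem_def.2 hy)]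
    by_cases hcb : c = b
    · subst hcb
      simp only [single, PEquiv.single_trans_single, ne_eq, not_true_eq_false, iff_false]
      intro h
      simpa [PEquiv.bot_apply] using congrArg (· a) h
    · simp [single, PEquiv.single_trans_single_of_ne hcb, hcb]

theorem eq_of_eqOn_dom_of_rank_le {x y : Elem ι n} (h : ∀ a ∈ dom x, y.1 a = x.1 a)
    (hr : rank y ≤ rank x) : y = x := by
  have hsub : dom x ⊆ dom y := fun a ha => by
    simpa only [dom, mem_ofPred_eq, h a ha] using ha
  have hdom : dom x = dom y := (dom_finite x).eq_of_subset_of_encard_le hsub hr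
  refine val_inj.1 (PEquiv.ext fun c => ?_)
  by_cases hc : c ∈ dom x
  · exact h c hc
  · have hcy : c ∉ dom y := hdom ▸ hc
    simp only [dom, mem_ofPred_eq, Option.not_isSome_iff_eq_none] at hc hcy
    rw [hc, hcy]

variable [TopologicalSpace (Elem ι n)] [T1Space (Elem ι n)]

theorem isOpen_setOf_apply_eq (hshift : ShiftContinuous ι n) (hn : 0 < n) (a b : ι) :
    IsOpen {y : Elem ι n | y.1 a = some b} := by
  have hcont : Continuous fun y => single a a hn * y * single b b hn :=
    (hshift _).2.comp (hshift _).1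
  convert (isClosed_singleton (x := zero ι n)).isOpen_compl.preimage hcont using 1
  ext y
  simp [single_mul_mul_single_eq_zero_iff]

theorem isOpen_setOf_eqOn_dom (hshift : ShiftContinuous ι n) (x : Elem ι n) :
    IsOpen {y : Elem ι n | ∀ a ∈ dom x, y.1 a = x.1 a} := by
  have : {y : Elem ι n | ∀ a ∈ dom x, y.1 a = x.1 a} =
      ⋂ a ∈ dom x, {y : Elem ι n | y.1 a = x.1 a} := by ext; simp
  rw [this]
  refine (dom_finite x).isOpen_biInter fun a ha => ?_
  obtain ⟨b, hb⟩ := Option.isSome_iff_exists.1 ha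
  rw [hb]
  exact isOpen_setOf_apply_eq hshift (pos_of_mem_dom ha) a b

end ISemi

theorem stmt8_general (ι : Type*) (n : ℕ)
    [TopologicalSpace (ISemi.Elem ι n)] [T1Space (ISemi.Elem ι n)]
    (hshift : ISemi.ShiftContinuous ι n) :
    ISemi.Scattered (ISemi.Elem ι n) :=
  ISemi.scattered_of_finite_range ISemi.rank ISemi.finite_range_rank fun x =>
    ⟨_, ISemi.isOpen_setOf_eqOn_dom hshift x, fun _ _ => rfl,
      fun _ hy => ISemi.eq_of_eqOn_dom_of_rank_le hy⟩

theorem stmt8 (ι : Type*) [Infinite ι] (n : ℕ) (hn : 0 < n)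
    [TopologicalSpace (ISemi.Elem ι n)] [T1Space (ISemi.Elem ι n)]
    (hshift : ISemi.ShiftContinuous ι n) :
    ISemi.Scattered (ISemi.Elem ι n) :=
  stmt8_general ι n hshift
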